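/- (Irreducibility of the reduction remainder.) Let f ∈ P^m with φ(f) ≠ 0, let s be a module term or ∞, let D ⊆ T(φ(f)), and write R := T_{G,s,D}(f). For every t ∈ R let m_t ∈ P^m satisfy LT(φ(m_t)) = t, LC(φ(m_t)) = 1 and m_t Sig-tail-irreducible w.r.t. G up to s. Set f′ := f − Σ_{t ∈ R} C_t(φ(f))·m_t. Then C_t(φ(f′)) = 0 for every t ∈ R, and T(φ(f′)) ⊆ (T(φ(f)) ∪ ⋃_{t ∈ R} T(φ(m_t))) \ R; in particular every term in T(φ(f′)) ∩ D is Sig-irreducible w.r.t. G up to s. -/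

import Mathlib

open MvPolynomial

/-- A term (power product) identified with its exponent vector in `ℕⁿ`;
the product of terms corresponds tord addition of exponent vectors. -/
abbrev Term (n : ℕ) := Fin n →₀ ℕ

/-- A module term `t·eᵢ` identified with the pair `(t, i)`. -/
abbrev MTerm (n m : ℕ) := (Fin n →₀ ℕ) × Fin m

/-- A monomial order on terms: a linear order with `1 ≤ t` for every term `t`,
compatible with term multiplication (= addition of exponent vectors). -/
structure TermOrder (n : ℕ) where
  le : Term n → Term n → Prop
  linear : IsLinearOrder (Term n) le
  bot : ∀ t : Term n, le 0 t
  add_le_add : ∀ u v w : Term n, le u v → le (w + u) (w + v)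

/-- A compatible order extension `⪯` of a monomial order tord module terms:
a linear order whose strict part is well-founded, satisfying
(i) `u ≤ v → u·eᵢ ⪯ v·eᵢ` and (ii) `t·eᵢ ⪯ t′·eⱼ → (u·t)·eᵢ ⪯ (u·t′)·eⱼ`. -/
structure ModOrder (n m : ℕ) (tord : TermOrder n) where
  le : MTerm n m → MTerm n m → Prop
  linear : IsLinearOrder (MTerm n m) le
  wf : WellFounded (fun a b : MTerm n m => le a b ∧ a ≠ b)
  compat : ∀ u v : Term n, tord.le u v → ∀ i : Fin m, le (u, i) (v, i)
  stable : ∀ (t t' : Term n) (i j : Fin m) (u : Term n),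
      le (t, i) (t', j) → le (u + t, i) (u + t', j)

variable {F : Type*} [Field F] {n m : ℕ}

/-- `IsLT tord f t` : `t` is the leading term of the polynomial `f` w.r.t. `tord`. -/
def IsLT (tord : TermOrder n) (f : MvPolynomial (Fin n) F) (t : Term n) : Prop :=
  t ∈ f.support ∧ ∀ u ∈ f.support, tord.le u t

/-- The module homomorphism `φ : P^m → P`, `(p₁,…,p_m) ↦ Σᵢ pᵢ·fᵢ`. -/
noncomputable def phi (fs : Fin m → MvPolynomial (Fin n) F)
    (f : Fin m → MvPolynomial (Fin n) F) : MvPolynomial (Fin n) F :=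
  ∑ i, f i * fs i

/-- The set of module terms occurring in a module element with nonzero coefficient. -/
def msupport (f : Fin m → MvPolynomial (Fin n) F) : Set (MTerm n m) :=
  {σ | MvPolynomial.coeff σ.1 (f σ.2) ≠ 0}

/-- `IsSig mo f σ` : `σ` is the signature of `f`, i.e. the `⪯`-largest module term of `f`. -/
def IsSig {tord : TermOrder n} (mo : ModOrder n m tord)
    (f : Fin m → MvPolynomial (Fin n) F) (σ : MTerm n m) : Prop :=
  σ ∈ msupport f ∧ ∀ τ ∈ msupport f, mo.le τ σ

/-- Multiplication of a module element by a term `u`. -/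
noncomputable def tmul (u : Term n) (f : Fin m → MvPolynomial (Fin n) F) :
    Fin m → MvPolynomial (Fin n) F :=
  fun i => MvPolynomial.monomial u (1 : F) * f i

/-- The strict part `≺` of `⪯`. -/
def mlt {tord : TermOrder n} (mo : ModOrder n m tord) (a b : MTerm n m) : Prop :=
  mo.le a b ∧ a ≠ b

/-- `σ ≺ s` where `s` is a module term or the formal symbol `∞ = ⊤`
(with `r ≺ ∞` for every module term `r`). -/
def ltE {tord : TermOrder n} (mo : ModOrder n m tord) (σ : MTerm n m)
    (s : WithTop (MTerm n m)) : Prop :=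
  ∀ τ : MTerm n m, s = ↑τ → mlt mo σ τ

/-- `σ ⪯ s` where `s` is a module term or the formal symbol `∞ = ⊤`. -/
def leE {tord : TermOrder n} (mo : ModOrder n m tord) (σ : MTerm n m)
    (s : WithTop (MTerm n m)) : Prop :=
  ∀ τ : MTerm n m, s = ↑τ → mo.le σ τ

/-- A term `t` is Sig-reducible w.r.t. `G` up tord `s` if there are `g ∈ G` and a term `u`
with `LT(φ(u·g)) = t` and `sig(u·g) ≺ s`. -/
def SigRedTerm (tord : TermOrder n) (mo : ModOrder n m tord)
    (fs : Fin m → MvPolynomial (Fin n) F)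
    (G : Finset (Fin m → MvPolynomial (Fin n) F))
    (s : WithTop (MTerm n m)) (t : Term n) : Prop :=
  ∃ g ∈ G, ∃ (u : Term n) (σ : MTerm n m),
    IsLT tord (phi fs (tmul u g)) t ∧ IsSig mo (tmul u g) σ ∧ ltE mo σ s

/-- `h` is Sig-tail-irreducible w.r.t. `G` up tord `s` : no term of `Tail(φ(h))`
is Sig-reducible w.r.t. `G` up tord `s`. -/
def SigTailIrred (tord : TermOrder n) (mo : ModOrder n m tord)
    (fs : Fin m → MvPolynomial (Fin n) F)
    (G : Finset (Fin m → MvPolynomial (Fin n) F))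
    (h : Fin m → MvPolynomial (Fin n) F) (s : WithTop (MTerm n m)) : Prop :=
  ∀ lt : Term n, IsLT tord (phi fs h) lt →
    ∀ t ∈ (phi fs h).support, t ≠ lt → ¬ SigRedTerm tord mo fs G s t

/-- A Sig-reduction step on `f` w.r.t. `G` at the term `t ∈ T(φ(f))`, producing `f'`. -/
def SigRedStepAt (tord : TermOrder n) (mo : ModOrder n m tord)
    (fs : Fin m → MvPolynomial (Fin n) F)
    (G : Finset (Fin m → MvPolynomial (Fin n) F))
    (t : Term n) (f f' : Fin m → MvPolynomial (Fin n) F) : Prop :=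
  ∃ g ∈ G, ∃ (u lg : Term n) (σf σug : MTerm n m),
    t ∈ (phi fs f).support ∧ IsLT tord (phi fs g) lg ∧ t = u + lg ∧
    IsSig mo f σf ∧ IsSig mo (tmul u g) σug ∧ mo.le σug σf ∧
    f' = f - (MvPolynomial.coeff t (phi fs f) / MvPolynomial.coeff lg (phi fs g)) • tmul u g

/-- A regular Sig-reduction step at `t` : additionally `sig(u·g) ≺ sig(f)`. -/
def RegSigRedStepAt (tord : TermOrder n) (mo : ModOrder n m tord)
    (fs : Fin m → MvPolynomial (Fin n) F)
    (G : Finset (Fin m → MvPolynomial (Fin n) F))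
    (t : Term n) (f f' : Fin m → MvPolynomial (Fin n) F) : Prop :=
  ∃ g ∈ G, ∃ (u lg : Term n) (σf σug : MTerm n m),
    t ∈ (phi fs f).support ∧ IsLT tord (phi fs g) lg ∧ t = u + lg ∧
    IsSig mo f σf ∧ IsSig mo (tmul u g) σug ∧ mlt mo σug σf ∧
    f' = f - (MvPolynomial.coeff t (phi fs f) / MvPolynomial.coeff lg (phi fs g)) • tmul u g

/-- A Sig-reduction step on `f` w.r.t. `G`. -/
def SigRedStep (tord : TermOrder n) (mo : ModOrder n m tord)
    (fs : Fin m → MvPolynomial (Fin n) F)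
    (G : Finset (Fin m → MvPolynomial (Fin n) F))
    (f f' : Fin m → MvPolynomial (Fin n) F) : Prop :=
  ∃ t : Term n, SigRedStepAt tord mo fs G t f f'

/-- A regular Sig-reduction step on `f` w.r.t. `G`. -/
def RegSigRedStep (tord : TermOrder n) (mo : ModOrder n m tord)
    (fs : Fin m → MvPolynomial (Fin n) F)
    (G : Finset (Fin m → MvPolynomial (Fin n) F))
    (f f' : Fin m → MvPolynomial (Fin n) F) : Prop :=
  ∃ t : Term n, RegSigRedStepAt tord mo fs G t f f'

/-- `f` Sig-reduces tord zero w.r.t. `G` : `f →_{G,∗} h` for some syzygy `h`. -/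
def SigReducesToZero (tord : TermOrder n) (mo : ModOrder n m tord)
    (fs : Fin m → MvPolynomial (Fin n) F)
    (G : Finset (Fin m → MvPolynomial (Fin n) F))
    (f : Fin m → MvPolynomial (Fin n) F) : Prop :=
  ∃ h, Relation.ReflTransGen (SigRedStep tord mo fs G) f h ∧ phi fs h = 0

/-- `G` is a Sig-Gröbner basis up tord the module term `s` :
every nonzero `f` with `sig(f) ≺ s` Sig-reduces tord zero w.r.t. `G`. -/
def SigGBUpTo (tord : TermOrder n) (mo : ModOrder n m tord)
    (fs : Fin m → MvPolynomial (Fin n) F)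
    (G : Finset (Fin m → MvPolynomial (Fin n) F)) (s : MTerm n m) : Prop :=
  ∀ f σ, f ≠ 0 → IsSig mo f σ → mlt mo σ s → SigReducesToZero tord mo fs G f

/-- `q` is a regular Sig-normal form of `p` w.r.t. `G`. -/
def RegNF (tord : TermOrder n) (mo : ModOrder n m tord)
    (fs : Fin m → MvPolynomial (Fin n) F)
    (G : Finset (Fin m → MvPolynomial (Fin n) F))
    (p q : Fin m → MvPolynomial (Fin n) F) : Prop :=
  Relation.ReflTransGen (RegSigRedStep tord mo fs G) p q ∧
    ∀ q', ¬ RegSigRedStep tord mo fs G q q'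

/-- `h` is singularly Sig-top-reducible w.r.t. `G` : a singular Sig-top-reduction step
applies tord `h`. -/
def SingTopReducible (tord : TermOrder n) (mo : ModOrder n m tord)
    (fs : Fin m → MvPolynomial (Fin n) F)
    (G : Finset (Fin m → MvPolynomial (Fin n) F))
    (h : Fin m → MvPolynomial (Fin n) F) : Prop :=
  ∃ t : Term n, IsLT tord (phi fs h) t ∧
    ∃ g ∈ G, ∃ (u lg : Term n) (σh σug : MTerm n m),
      IsLT tord (phi fs g) lg ∧ t = u + lg ∧
      IsSig mo h σh ∧ IsSig mo (tmul u g) σug ∧ σug = σh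

/-- The least common multiple of two terms: the pointwise maximum of exponent vectors. -/
noncomputable def lcmTerm (a b : Term n) : Term n := Finsupp.zipWith max (max_self 0) a b

/-- `p` is the S-pair of `f` and `g` and this S-pair is regular. -/
def IsRegSpair (tord : TermOrder n) (mo : ModOrder n m tord)
    (fs : Fin m → MvPolynomial (Fin n) F)
    (f g p : Fin m → MvPolynomial (Fin n) F) : Prop :=
  ∃ lf lg : Term n, IsLT tord (phi fs f) lf ∧ IsLT tord (phi fs g) lg ∧
    (∀ σ₁ σ₂ : MTerm n m, IsSig mo (tmul (lcmTerm lf lg - lf) f) σ₁ →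
      IsSig mo (tmul (lcmTerm lf lg - lg) g) σ₂ → σ₁ ≠ σ₂) ∧
    p = (MvPolynomial.coeff lf (phi fs f))⁻¹ • tmul (lcmTerm lf lg - lf) f
      - (MvPolynomial.coeff lg (phi fs g))⁻¹ • tmul (lcmTerm lf lg - lg) g

/-- `T_G(f)` : the set of terms of `f` that are reducible w.r.t. the set `G`
of nonzero polynomials. -/
def TRed (tord : TermOrder n) (G : Finset (MvPolynomial (Fin n) F))
    (f : MvPolynomial (Fin n) F) : Set (Term n) :=
  {t | t ∈ f.support ∧ ∃ g ∈ G, ∃ lg u : Term n, IsLT tord g lg ∧ t = u + lg}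

/-- An ordinary reduction step on a polynomial `p` w.r.t. the polynomials `φ(g)`, `g ∈ G`. -/
noncomputable def OrdRedStep (tord : TermOrder n)
    (fs : Fin m → MvPolynomial (Fin n) F)
    (G : Finset (Fin m → MvPolynomial (Fin n) F))
    (p p' : MvPolynomial (Fin n) F) : Prop :=
  ∃ g ∈ G, ∃ (u lg : Term n),
    IsLT tord (phi fs g) lg ∧ (u + lg) ∈ p.support ∧
    p' = p - (MvPolynomial.coeff (u + lg) p / MvPolynomial.coeff lg (phi fs g)) •
      (MvPolynomial.monomial u (1 : F) * phi fs g)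

section Phi

variable (fs : Fin m → MvPolynomial (Fin n) F)

theorem phi_sub (f g : Fin m → MvPolynomial (Fin n) F) :
    phi fs (f - g) = phi fs f - phi fs g := by
  simp only [phi, Pi.sub_apply, sub_mul, Finset.sum_sub_distrib]

theorem phi_smul (c : F) (f : Fin m → MvPolynomial (Fin n) F) :
    phi fs (c • f) = c • phi fs f := by
  simp only [phi, Pi.smul_apply, smul_mul_assoc, Finset.smul_sum]

theorem phi_sum {ι : Type*} (S : Finset ι) (f : ι → Fin m → MvPolynomial (Fin n) F) :
    phi fs (∑ j ∈ S, f j) = ∑ j ∈ S, phi fs (f j) := by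
  simp only [phi, Finset.sum_apply, Finset.sum_mul]
  exact Finset.sum_comm

end Phi

section Elimination

variable {σ R : Type*} [CommRing R] (p : MvPolynomial σ R) (S : Finset (σ →₀ ℕ))
  (q : (σ →₀ ℕ) → MvPolynomial σ R)

theorem coeff_sub_sum_coeff_smul_eq_zero (hq : ∀ t ∈ S, coeff t (q t) = 1)
    (hq' : ∀ t ∈ S, ∀ t' ∈ S, t ≠ t' → coeff t (q t') = 0) {t : σ →₀ ℕ} (ht : t ∈ S) :
    coeff t (p - ∑ t' ∈ S, coeff t' p • q t') = 0 := by
  rw [coeff_sub, coeff_sum, Finset.sum_eq_single_of_mem t ht, coeff_smul, hq t ht,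
    smul_eq_mul, mul_one, sub_self]
  intro t' ht' hne
  rw [coeff_smul, hq' t ht t' ht' hne.symm, smul_zero]

theorem support_sub_sum_smul_subset [DecidableEq σ] (c : (σ →₀ ℕ) → R) :
    (p - ∑ t ∈ S, c t • q t).support ⊆ p.support ∪ S.biUnion fun t => (q t).support := by
  refine (support_sub σ _ _).trans (Finset.union_subset_union le_rfl ?_)
  exact support_sum.trans (Finset.biUnion_mono fun t _ => support_smul)

end Elimination

theorem SigTailIrred.coeff_eq_zero {tord : TermOrder n} {mo : ModOrder n m tord}
    {fs : Fin m → MvPolynomial (Fin n) F} {G : Finset (Fin m → MvPolynomial (Fin n) F)}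
    {h : Fin m → MvPolynomial (Fin n) F} {s : WithTop (MTerm n m)}
    (hirr : SigTailIrred tord mo fs G h s) {lt t : Term n} (hlt : IsLT tord (phi fs h) lt)
    (hne : t ≠ lt) (hred : SigRedTerm tord mo fs G s t) : coeff t (phi fs h) = 0 :=
  notMem_support_iff.1 fun ht => hirr lt hlt t ht hne hred

theorem statement2_general {F : Type*} [Field F] {n m : ℕ}
    (tord : TermOrder n) (mo : ModOrder n m tord)
    (fs : Fin m → MvPolynomial (Fin n) F)
    (G : Finset (Fin m → MvPolynomial (Fin n) F))
    (f : Fin m → MvPolynomial (Fin n) F)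
    (s : WithTop (MTerm n m))
    (D : Finset (Term n))
    (R : Finset (Term n))
    (hR : ∀ t, t ∈ R ↔ t ∈ D ∧ SigRedTerm tord mo fs G s t)
    (M : Term n → (Fin m → MvPolynomial (Fin n) F))
    (hM : ∀ t ∈ R, IsLT tord (phi fs (M t)) t ∧
      MvPolynomial.coeff t (phi fs (M t)) = 1 ∧
      SigTailIrred tord mo fs G (M t) s)
    (f' : Fin m → MvPolynomial (Fin n) F)
    (hf' : f' = f - ∑ t ∈ R, MvPolynomial.coeff t (phi fs f) • M t) :
    (∀ t ∈ R, MvPolynomial.coeff t (phi fs f') = 0) ∧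
    (phi fs f').support ⊆
      ((phi fs f).support ∪ R.biUnion fun t => (phi fs (M t)).support) \ R ∧
    (∀ t ∈ D, t ∈ (phi fs f').support → ¬ SigRedTerm tord mo fs G s t) := by
  have hphi : phi fs f' = phi fs f - ∑ t ∈ R, coeff t (phi fs f) • phi fs (M t) := by
    simp only [hf', phi_sub, phi_sum, phi_smul]
  have hvanish : ∀ t ∈ R, coeff t (phi fs f') = 0 := fun t ht => by
    rw [hphi]
    refine coeff_sub_sum_coeff_smul_eq_zero _ R _ (fun t ht => (hM t ht).2.1)
      (fun t ht t' ht' hne => ?_) ht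
    -- the terms of `R` are Sig-reducible, so none of them lies in the tail of `φ(M t')`
    exact (hM t' ht').2.2.coeff_eq_zero (hM t' ht').1 hne ((hR t).1 ht).2
  have hsupport : (phi fs f').support ⊆
      ((phi fs f).support ∪ R.biUnion fun t => (phi fs (M t)).support) \ R := by
    intro u hu
    refine Finset.mem_sdiff.2 ⟨?_, fun huR => mem_support_iff.1 hu (hvanish u huR)⟩
    rw [hphi] at hu
    exact support_sub_sum_smul_subset _ R _ _ hu
  refine ⟨hvanish, hsupport, fun t htD ht hred => ?_⟩
  exact (Finset.mem_sdiff.1 (hsupport ht)).2 ((hR t).2 ⟨htD, hred⟩)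

/-- Irreducibility of the reduction remainder.
With `R = T_{G,s,D}(f)` and monic Sig-tail-irreducible reductors `m_t`
(`t ∈ R`), the remainder `f′ = f − Σ_{t∈R} C_t(φ(f))·m_t` satisfies
`C_t(φ(f′)) = 0` for all `t ∈ R`, `T(φ(f′)) ⊆ (T(φ(f)) ∪ ⋃_{t∈R} T(φ(m_t))) \ R`,
and every term of `T(φ(f′)) ∩ D` is Sig-irreducible w.r.t. `G` up to `s`. -/
theorem statement2 {F : Type*} [Field F] {n m : ℕ} (hn : 0 < n) (hm : 0 < m)
    (tord : TermOrder n) (mo : ModOrder n m tord)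
    (fs : Fin m → MvPolynomial (Fin n) F) (hfs : ∀ i, fs i ≠ 0)
    (G : Finset (Fin m → MvPolynomial (Fin n) F))
    (hG0 : ∀ g ∈ G, g ≠ 0) (hGphi : ∀ g ∈ G, phi fs g ≠ 0)
    (f : Fin m → MvPolynomial (Fin n) F) (hf : phi fs f ≠ 0)
    (s : WithTop (MTerm n m))
    (D : Finset (Term n)) (hD : D ⊆ (phi fs f).support)
    (R : Finset (Term n))
    (hR : ∀ t, t ∈ R ↔ t ∈ D ∧ SigRedTerm tord mo fs G s t)
    (M : Term n → (Fin m → MvPolynomial (Fin n) F))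
    (hM : ∀ t ∈ R, IsLT tord (phi fs (M t)) t ∧
      MvPolynomial.coeff t (phi fs (M t)) = 1 ∧
      SigTailIrred tord mo fs G (M t) s)
    (f' : Fin m → MvPolynomial (Fin n) F)
    (hf' : f' = f - ∑ t ∈ R, MvPolynomial.coeff t (phi fs f) • M t) :
    (∀ t ∈ R, MvPolynomial.coeff t (phi fs f') = 0) ∧
    (phi fs f').support ⊆
      ((phi fs f).support ∪ R.biUnion fun t => (phi fs (M t)).support) \ R ∧
    (∀ t ∈ D, t ∈ (phi fs f').support → ¬ SigRedTerm tord mo fs G s t) :=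
  statement2_general tord mo fs G f s D R hR M hM f' hf'
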